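/- Fix reals a < b and positive constants ρ, A, I, E, T₀, κ, G. Let ε_w, p_w, ε_φ, p_φ, ε_s : ℝ × ℝ → ℝ be smooth and set v := p_w/(ρA), σ_w := T₀ ε_w, ω := p_φ/(ρI), σ_φ := E I ε_φ, N := A κ G ε_s. Assume the explicit Timoshenko dynamics on ℝ × [a,b]: ∂ₜε_w = ∂ₓv; ∂ₜp_w = ∂ₓσ_w + ∂ₓN; ∂ₜε_φ = ∂ₓω; ∂ₜp_φ = ∂ₓσ_φ + N; ∂ₜε_s = ∂ₓv − ω. Define H(t) := (1/2)∫ₐᵇ ( p_w²/(ρA) + T₀ ε_w² + p_φ²/(ρI) + E I ε_φ² + A κ G ε_s² ) dx. Then for all t, H'(t) = [ v σ_w + v N + ω σ_φ ]ₐᵇ, where [g]ₐᵇ := g(t,b) − g(t,a). -/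

import Mathlib

noncomputable def dt (h : ℝ → ℝ → ℝ) : ℝ → ℝ → ℝ := fun t x => deriv (fun s => h s x) t
noncomputable def dx (h : ℝ → ℝ → ℝ) : ℝ → ℝ → ℝ := fun t x => deriv (fun y => h t y) x

open Function intervalIntegral MeasureTheory

section Aux

lemma slice_t {g : ℝ → ℝ → ℝ} (hg : ContDiff ℝ (⊤ : ℕ∞) (uncurry g)) (t x : ℝ) :
    HasDerivAt (fun s => g s x) (fderiv ℝ (uncurry g) (t, x) (1, 0)) t := by
  have h1 : HasFDerivAt (uncurry g) (fderiv ℝ (uncurry g) (t, x)) (t, x) :=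
    (hg.differentiable (by simp) (t, x)).hasFDerivAt
  have h2 : HasFDerivAt (fun s : ℝ => (s, x)) (ContinuousLinearMap.inl ℝ ℝ ℝ) t :=
    hasFDerivAt_prodMk_left t x
  exact (h1.comp t h2).hasDerivAt

lemma slice_x {g : ℝ → ℝ → ℝ} (hg : ContDiff ℝ (⊤ : ℕ∞) (uncurry g)) (t x : ℝ) :
    HasDerivAt (fun y => g t y) (fderiv ℝ (uncurry g) (t, x) (0, 1)) x := by
  have h1 : HasFDerivAt (uncurry g) (fderiv ℝ (uncurry g) (t, x)) (t, x) :=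
    (hg.differentiable (by simp) (t, x)).hasFDerivAt
  have h2 : HasFDerivAt (fun y : ℝ => (t, y)) (ContinuousLinearMap.inr ℝ ℝ ℝ) x :=
    hasFDerivAt_prodMk_right t x
  exact (h1.comp x h2).hasDerivAt

lemma dt_eq {g : ℝ → ℝ → ℝ} (hg : ContDiff ℝ (⊤ : ℕ∞) (uncurry g)) (t x : ℝ) :
    dt g t x = fderiv ℝ (uncurry g) (t, x) (1, 0) := (slice_t hg t x).deriv

lemma dx_eq {g : ℝ → ℝ → ℝ} (hg : ContDiff ℝ (⊤ : ℕ∞) (uncurry g)) (t x : ℝ) :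
    dx g t x = fderiv ℝ (uncurry g) (t, x) (0, 1) := (slice_x hg t x).deriv

lemma hasDerivAt_dt {g : ℝ → ℝ → ℝ} (hg : ContDiff ℝ (⊤ : ℕ∞) (uncurry g)) (t x : ℝ) :
    HasDerivAt (fun s => g s x) (dt g t x) t := by rw [dt_eq hg]; exact slice_t hg t x

lemma hasDerivAt_dx {g : ℝ → ℝ → ℝ} (hg : ContDiff ℝ (⊤ : ℕ∞) (uncurry g)) (t x : ℝ) :
    HasDerivAt (fun y => g t y) (dx g t x) x := by rw [dx_eq hg]; exact slice_x hg t x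

lemma continuous_dt {g : ℝ → ℝ → ℝ} (hg : ContDiff ℝ (⊤ : ℕ∞) (uncurry g)) :
    Continuous (fun p : ℝ × ℝ => dt g p.1 p.2) := by
  have h : Continuous (fderiv ℝ (uncurry g)) := hg.continuous_fderiv (by simp)
  have : Continuous (fun p : ℝ × ℝ => fderiv ℝ (uncurry g) p (1, 0)) :=
    h.clm_apply continuous_const
  refine this.congr ?_
  intro p; rw [dt_eq hg]

lemma continuous_dx {g : ℝ → ℝ → ℝ} (hg : ContDiff ℝ (⊤ : ℕ∞) (uncurry g)) :
    Continuous (fun p : ℝ × ℝ => dx g p.1 p.2) := by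
  have h : Continuous (fderiv ℝ (uncurry g)) := hg.continuous_fderiv (by simp)
  have : Continuous (fun p : ℝ × ℝ => fderiv ℝ (uncurry g) p (0, 1)) :=
    h.clm_apply continuous_const
  refine this.congr ?_
  intro p; rw [dx_eq hg]

lemma hasDerivAt_param_integral {g : ℝ → ℝ → ℝ} (hg : ContDiff ℝ (⊤ : ℕ∞) (uncurry g))
    (a b t : ℝ) :
    HasDerivAt (fun s => ∫ x in a..b, g s x) (∫ x in a..b, dt g t x) t := by
  have hgc : Continuous (uncurry g) := hg.continuous
  have hdtc := continuous_dt hg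
  obtain ⟨C, hC⟩ : ∃ C, ∀ p ∈ Set.Icc (t - 1) (t + 1) ×ˢ Set.uIcc a b,
      ‖dt g p.1 p.2‖ ≤ C :=
    (isCompact_Icc.prod isCompact_uIcc).exists_bound_of_continuousOn hdtc.continuousOn
  have key := intervalIntegral.hasDerivAt_integral_of_dominated_loc_of_deriv_le
    (F := g) (F' := fun s x => dt g s x) (x₀ := t) (bound := fun _ => C)
    (μ := volume) (a := a) (b := b) (Metric.ball_mem_nhds t one_pos)
    (Filter.Eventually.of_forall fun s =>
      (hgc.comp (Continuous.prodMk_right s)).aestronglyMeasurable)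
    ((hgc.comp (Continuous.prodMk_right t)).intervalIntegrable a b)
    ((hdtc.comp (Continuous.prodMk_right t)).aestronglyMeasurable)
    (ae_of_all _ fun x hx s hs => hC (s, x)
      ⟨by
        constructor <;> [linarith [abs_lt.mp (by simpa [Real.dist_eq] using hs) |>.1];
          linarith [abs_lt.mp (by simpa [Real.dist_eq] using hs) |>.2]],
        Set.uIoc_subset_uIcc hx⟩)
    (intervalIntegrable_const)
    (ae_of_all _ fun x hx s hs => hasDerivAt_dt hg s x)
  exact key.2

end Aux

/-- Power balance for the explicit Timoshenko beam:
`H'(t) = [v σ_w + v N + ω σ_φ]ₐᵇ`. -/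
theorem stmt9 (a b : ℝ) (hab : a < b) (ρ A I E T₀ κ G : ℝ)
    (hρ : 0 < ρ) (hA : 0 < A) (hI : 0 < I) (hE : 0 < E) (hT : 0 < T₀) (hκ : 0 < κ)
    (hG : 0 < G)
    (εw pw εφ pφ εs : ℝ → ℝ → ℝ)
    (hεw : ContDiff ℝ (⊤ : ℕ∞) (Function.uncurry εw)) (hpw : ContDiff ℝ (⊤ : ℕ∞) (Function.uncurry pw))
    (hεφ : ContDiff ℝ (⊤ : ℕ∞) (Function.uncurry εφ)) (hpφ : ContDiff ℝ (⊤ : ℕ∞) (Function.uncurry pφ))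
    (hεs : ContDiff ℝ (⊤ : ℕ∞) (Function.uncurry εs))
    (v σw ω σφ N : ℝ → ℝ → ℝ)
    (hv : v = fun t x => pw t x / (ρ * A))
    (hσw : σw = fun t x => T₀ * εw t x)
    (hω : ω = fun t x => pφ t x / (ρ * I))
    (hσφ : σφ = fun t x => E * I * εφ t x)
    (hN : N = fun t x => A * κ * G * εs t x)
    (hdyn₁ : ∀ t : ℝ, ∀ x ∈ Set.Icc a b, dt εw t x = dx v t x)
    (hdyn₂ : ∀ t : ℝ, ∀ x ∈ Set.Icc a b, dt pw t x = dx σw t x + dx N t x)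
    (hdyn₃ : ∀ t : ℝ, ∀ x ∈ Set.Icc a b, dt εφ t x = dx ω t x)
    (hdyn₄ : ∀ t : ℝ, ∀ x ∈ Set.Icc a b, dt pφ t x = dx σφ t x + N t x)
    (hdyn₅ : ∀ t : ℝ, ∀ x ∈ Set.Icc a b, dt εs t x = dx v t x - ω t x) :
    ∀ t : ℝ,
      HasDerivAt
        (fun s => (1 / 2 : ℝ) * ∫ x in a..b,
          ((pw s x) ^ 2 / (ρ * A) + T₀ * (εw s x) ^ 2 + (pφ s x) ^ 2 / (ρ * I)
            + E * I * (εφ s x) ^ 2 + A * κ * G * (εs s x) ^ 2))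
        ((v t b * σw t b + v t b * N t b + ω t b * σφ t b)
          - (v t a * σw t a + v t a * N t a + ω t a * σφ t a)) t := by
  subst hv hσw hω hσφ hN
  intro t
  have hρA : (ρ * A) ≠ 0 := by positivity
  have hρI : (ρ * I) ≠ 0 := by positivity
  -- smoothness of the energy density
  have hF : ContDiff ℝ (⊤ : ℕ∞) (Function.uncurry (fun s x =>
      (pw s x) ^ 2 / (ρ * A) + T₀ * (εw s x) ^ 2 + (pφ s x) ^ 2 / (ρ * I)
        + E * I * (εφ s x) ^ 2 + A * κ * G * (εs s x) ^ 2)) :=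
    (((((hpw.pow 2).div_const (ρ * A)).add (contDiff_const.mul (hεw.pow 2))).add
      ((hpφ.pow 2).div_const (ρ * I))).add (contDiff_const.mul (hεφ.pow 2))).add
      (contDiff_const.mul (hεs.pow 2))
  -- smoothness of the flux G
  have hGf : ContDiff ℝ (⊤ : ℕ∞) (Function.uncurry (fun t x =>
      pw t x / (ρ * A) * (T₀ * εw t x) + pw t x / (ρ * A) * (A * κ * G * εs t x)
        + pφ t x / (ρ * I) * (E * I * εφ t x))) :=
    (((hpw.div_const (ρ * A)).mul (contDiff_const.mul hεw)).add
      ((hpw.div_const (ρ * A)).mul (contDiff_const.mul hεs))).add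
      ((hpφ.div_const (ρ * I)).mul (contDiff_const.mul hεφ))
  -- time derivative of the energy density
  have e1 : ∀ x : ℝ, dt (fun s x =>
      (pw s x) ^ 2 / (ρ * A) + T₀ * (εw s x) ^ 2 + (pφ s x) ^ 2 / (ρ * I)
        + E * I * (εφ s x) ^ 2 + A * κ * G * (εs s x) ^ 2) t x
      = 2 * pw t x * dt pw t x / (ρ * A) + T₀ * (2 * εw t x * dt εw t x)
        + 2 * pφ t x * dt pφ t x / (ρ * I) + E * I * (2 * εφ t x * dt εφ t x)
        + A * κ * G * (2 * εs t x * dt εs t x) := by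
    intro x
    have H := (((((hasDerivAt_dt hpw t x).pow 2).div_const (ρ * A)).add
      (((hasDerivAt_dt hεw t x).pow 2).const_mul T₀)).add
      (((hasDerivAt_dt hpφ t x).pow 2).div_const (ρ * I))).add
      (((hasDerivAt_dt hεφ t x).pow 2).const_mul (E * I)) |>.add
      (((hasDerivAt_dt hεs t x).pow 2).const_mul (A * κ * G))
    refine H.deriv.trans ?_
    push_cast
    ring
  -- space derivative of the flux
  have e2 : ∀ x : ℝ, dx (fun t x =>
      pw t x / (ρ * A) * (T₀ * εw t x) + pw t x / (ρ * A) * (A * κ * G * εs t x)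
        + pφ t x / (ρ * I) * (E * I * εφ t x)) t x
      = (dx pw t x / (ρ * A) * (T₀ * εw t x) + pw t x / (ρ * A) * (T₀ * dx εw t x))
        + (dx pw t x / (ρ * A) * (A * κ * G * εs t x)
            + pw t x / (ρ * A) * (A * κ * G * dx εs t x))
        + (dx pφ t x / (ρ * I) * (E * I * εφ t x)
            + pφ t x / (ρ * I) * (E * I * dx εφ t x)) := by
    intro x
    have H := ((((hasDerivAt_dx hpw t x).div_const (ρ * A)).mul
        ((hasDerivAt_dx hεw t x).const_mul T₀)).add
      (((hasDerivAt_dx hpw t x).div_const (ρ * A)).mul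
        ((hasDerivAt_dx hεs t x).const_mul (A * κ * G)))).add
      (((hasDerivAt_dx hpφ t x).div_const (ρ * I)).mul
        ((hasDerivAt_dx hεφ t x).const_mul (E * I)))
    refine H.deriv.trans ?_
    ring
  -- simplification of the dx of the effort lambdas
  have sv : ∀ x : ℝ, dx (fun t x => pw t x / (ρ * A)) t x = dx pw t x / (ρ * A) := by
    intro x; simp [dx, deriv_div_const]
  have sω : ∀ x : ℝ, dx (fun t x => pφ t x / (ρ * I)) t x = dx pφ t x / (ρ * I) := by
    intro x; simp [dx, deriv_div_const]
  have sσw : ∀ x : ℝ, dx (fun t x => T₀ * εw t x) t x = T₀ * dx εw t x := by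
    intro x; simp [dx, deriv_const_mul_field]
  have sσφ : ∀ x : ℝ, dx (fun t x => E * I * εφ t x) t x = E * I * dx εφ t x := by
    intro x; simp [dx, deriv_const_mul_field]
  have sN : ∀ x : ℝ, dx (fun t x => A * κ * G * εs t x) t x = A * κ * G * dx εs t x := by
    intro x; simp [dx, deriv_const_mul_field]
  -- pointwise identity: ∂ₜ(density) = 2 ∂ₓ(flux) on [a,b]
  have hcong : (∫ x in a..b, dt (fun s x =>
      (pw s x) ^ 2 / (ρ * A) + T₀ * (εw s x) ^ 2 + (pφ s x) ^ 2 / (ρ * I)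
        + E * I * (εφ s x) ^ 2 + A * κ * G * (εs s x) ^ 2) t x)
      = ∫ x in a..b, 2 * dx (fun t x =>
          pw t x / (ρ * A) * (T₀ * εw t x) + pw t x / (ρ * A) * (A * κ * G * εs t x)
            + pφ t x / (ρ * I) * (E * I * εφ t x)) t x := by
    refine intervalIntegral.integral_congr ?_
    intro x hx
    have hx' : x ∈ Set.Icc a b := by rwa [Set.uIcc_of_le hab.le] at hx
    have d1 := hdyn₁ t x hx'
    have d2 := hdyn₂ t x hx'
    have d3 := hdyn₃ t x hx'
    have d4 := hdyn₄ t x hx'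
    have d5 := hdyn₅ t x hx'
    rw [sv x] at d1 d5
    rw [sσw x, sN x] at d2
    rw [sω x] at d3
    rw [sσφ x] at d4
    simp only at d4 d5
    beta_reduce
    rw [e1 x, e2 x, d1, d2, d3, d4, d5]
    field_simp
    ring
  -- fundamental theorem of calculus for the flux
  have hFTC : (∫ x in a..b, dx (fun t x =>
      pw t x / (ρ * A) * (T₀ * εw t x) + pw t x / (ρ * A) * (A * κ * G * εs t x)
        + pφ t x / (ρ * I) * (E * I * εφ t x)) t x)
      = (pw t b / (ρ * A) * (T₀ * εw t b) + pw t b / (ρ * A) * (A * κ * G * εs t b)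
          + pφ t b / (ρ * I) * (E * I * εφ t b))
        - (pw t a / (ρ * A) * (T₀ * εw t a) + pw t a / (ρ * A) * (A * κ * G * εs t a)
          + pφ t a / (ρ * I) * (E * I * εφ t a)) := by
    refine intervalIntegral.integral_eq_sub_of_hasDerivAt
      (fun x _ => hasDerivAt_dx hGf t x) ?_
    exact ((continuous_dx hGf).comp (Continuous.prodMk_right t)).intervalIntegrable a b
  have hH := (hasDerivAt_param_integral hF a b t).const_mul (1 / 2 : ℝ)
  have hval : ((fun t x => pw t x / (ρ * A)) t b * ((fun t x => T₀ * εw t x) t b)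
        + (fun t x => pw t x / (ρ * A)) t b * ((fun t x => A * κ * G * εs t x) t b)
        + (fun t x => pφ t x / (ρ * I)) t b * ((fun t x => E * I * εφ t x) t b))
      - ((fun t x => pw t x / (ρ * A)) t a * ((fun t x => T₀ * εw t x) t a)
        + (fun t x => pw t x / (ρ * A)) t a * ((fun t x => A * κ * G * εs t x) t a)
        + (fun t x => pφ t x / (ρ * I)) t a * ((fun t x => E * I * εφ t x) t a))
      = (1 / 2 : ℝ) * ∫ x in a..b, dt (fun s x =>
          (pw s x) ^ 2 / (ρ * A) + T₀ * (εw s x) ^ 2 + (pφ s x) ^ 2 / (ρ * I)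
            + E * I * (εφ s x) ^ 2 + A * κ * G * (εs s x) ^ 2) t x := by
    rw [hcong, intervalIntegral.integral_const_mul, hFTC]
    simp only []
    ring
  rw [hval]
  exact hH
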